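/- Let (X, ρ) be a nonempty compact metric space and let T : X → X be a continuous, open, distance-expanding map. Then T has a periodic point in X, i.e., there exist z ∈ X and an integer n ≥ 1 with T^n(z) = z. -/

import Mathlib

/-- A map `T` on a metric space is *distance-expanding* if there exist `λ > 1`, `η > 0`
and `N ≥ 0` such that points at distance at most `η` have their `N`-th iterates at
distance at least `λ` times the original distance. -/
def DistanceExpanding {X : Type*} [MetricSpace X] (T : X → X) : Prop :=
  ∃ (l : ℝ) (η : ℝ) (N : ℕ), 1 < l ∧ 0 < η ∧
    ∀ x y : X, dist x y ≤ η → l * dist x y ≤ dist (T^[N] x) (T^[N] y)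

/-! Passing to an iterate `S = T^[N]`, we may assume `S` itself expands distances by `λ > 1`
at scale `η`. Openness and compactness give a uniform `ξ > 0` with `ball (S x) ξ ⊆ S '' ball x η`,
so points `ξ`-close to `S x` have preimages near `x`, and these inverse branches contract by
`λ⁻¹`. By compactness some orbit nearly closes up, `dist (S^[m] b) b < ξ`; iterating the
contracting inverse branch of `S^[m]` starting from `b` gives a Cauchy sequence whose limit is
fixed by `S^[m]`. -/

open Filter Function Metric Set Topology

theorem IsOpenMap.iterate {X : Type*} [TopologicalSpace X] {f : X → X} (hf : IsOpenMap f) :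
    ∀ n, IsOpenMap f^[n]
  | 0 => .id
  | n + 1 => (hf.iterate n).comp hf

theorem IsOpenMap.exists_pos_forall_ball_subset_image_ball {X Y : Type*} [PseudoMetricSpace X]
    [CompactSpace X] [PseudoMetricSpace Y] {f : X → Y} (hf : IsOpenMap f) (hc : Continuous f)
    {η : ℝ} (hη : 0 < η) : ∃ ξ > 0, ∀ x, ball (f x) ξ ⊆ f '' ball x η := by
  have hsmall : ∀ᶠ ξ in 𝓝 (0 : ℝ), ∀ x ∈ univ, ball (f x) ξ ⊆ f '' ball x η := by
    refine isCompact_univ.eventually_forall_of_forall_eventually fun x _ => ?_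
    obtain ⟨ε, hε, hεball⟩ := isOpen_iff.1 (hf _ isOpen_ball) (f x)
      (mem_image_of_mem f (mem_ball_self (half_pos hη)))
    have hnear : ∀ᶠ x' in 𝓝 x, x' ∈ ball x (η / 2) ∧ f x' ∈ ball (f x) (ε / 2) :=
      inter_mem (ball_mem_nhds x (half_pos hη)) ((hc.tendsto x) (ball_mem_nhds _ (half_pos hε)))
    filter_upwards [(gt_mem_nhds (half_pos hε)).prod_nhds hnear] with ⟨ξ, x'⟩ ⟨hξ, hx', hfx'⟩ w hw
    have hw' : dist w (f x) < ε := by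
      rw [mem_ball] at hw hfx'
      linarith [dist_triangle w (f x') (f x)]
    obtain ⟨y, hy, rfl⟩ := hεball hw'
    rw [mem_ball] at hy hx'
    exact ⟨y, by rw [mem_ball]; linarith [dist_triangle y x x', dist_comm x x'], rfl⟩
  obtain ⟨ξ, hξ, hξpos⟩ := ((hsmall.filter_mono nhdsWithin_le_nhds).and
    (self_mem_nhdsWithin : Ioi (0 : ℝ) ∈ 𝓝[>] 0)).exists
  exact ⟨ξ, hξpos, fun x => hξ x (mem_univ x)⟩

theorem exists_pos_dist_iterate_lt {X : Type*} [PseudoMetricSpace X] [CompactSpace X]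
    [Nonempty X] (S : X → X) {ε : ℝ} (hε : 0 < ε) : ∃ b m, 0 < m ∧ dist (S^[m] b) b < ε := by
  let x : X := Classical.arbitrary X
  obtain ⟨a, -, φ, hφ, hlim⟩ := isCompact_univ.tendsto_subseq fun n => mem_univ (S^[n] x)
  obtain ⟨N, hN⟩ := cauchySeq_iff'.1 hlim.cauchySeq ε hε
  have hlt : φ N < φ (N + 1) := hφ N.lt_succ_self
  refine ⟨S^[φ N] x, φ (N + 1) - φ N, Nat.sub_pos_of_lt hlt, ?_⟩
  rw [← iterate_add_apply, Nat.sub_add_cancel hlt.le]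
  exact hN _ N.le_succ

theorem exists_iterate_eq_and_pow_mul_dist_le {X : Type*} [PseudoMetricSpace X] {S : X → X}
    {l η ξ : ℝ} (hl : 1 ≤ l) (hexp : ∀ x y, dist x y ≤ η → l * dist x y ≤ dist (S x) (S y))
    (hball : ∀ x, ball (S x) ξ ⊆ S '' ball x η) (m : ℕ) {x z : X}
    (hz : dist (S^[m] x) z < ξ) : ∃ y, S^[m] y = z ∧ l ^ m * dist x y ≤ dist (S^[m] x) z := by
  induction m generalizing z with
  | zero => exact ⟨z, rfl, by simp⟩
  | succ m ih =>
    rw [iterate_succ_apply'] at hz ⊢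
    obtain ⟨y₁, hy₁, rfl⟩ := hball _ (mem_ball_comm.1 hz)
    have hexp₁ := hexp _ _ (mem_ball_comm.1 hy₁).le
    obtain ⟨y, rfl, hy⟩ := ih (z := y₁) (by nlinarith [dist_nonneg (x := S^[m] x) (y := y₁)])
    refine ⟨y, iterate_succ_apply' .., ?_⟩
    calc l ^ (m + 1) * dist x y = l * (l ^ m * dist x y) := by ring
      _ ≤ l * dist (S^[m] x) (S^[m] y) := by gcongr
      _ ≤ _ := hexp₁

theorem exists_isFixedPt_of_forall_exists_preimage {X : Type*} [MetricSpace X] [CompleteSpace X]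
    {f : X → X} (hf : Continuous f) {c : ℝ} (hc₀ : 0 ≤ c) (hc₁ : c < 1) {A : Set X}
    (hA : A.Nonempty) (h : ∀ x ∈ A, ∃ y ∈ A, f y = x ∧ dist x y ≤ c * dist (f x) x) :
    ∃ z, IsFixedPt f z := by
  obtain ⟨b, hb⟩ := hA
  choose! g hgA hfg hdist using h
  set u : ℕ → X := fun n => g^[n] b
  have huA : ∀ n, u n ∈ A := fun n => MapsTo.iterate (f := g) hgA n hb
  have hfu : ∀ n, f (u (n + 1)) = u n := fun n => by
    simp only [u, iterate_succ_apply']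
    exact hfg _ (huA n)
  have hgeom : ∀ n, dist (u n) (u (n + 1)) ≤ c * dist (f b) b * c ^ n := by
    intro n
    induction n with
    | zero => simpa [u] using hdist b hb
    | succ n ih =>
      calc dist (u (n + 1)) (u (n + 2)) ≤ c * dist (f (u (n + 1))) (u (n + 1)) := by
            simpa only [u, iterate_succ_apply'] using hdist _ (huA (n + 1))
        _ = c * dist (u n) (u (n + 1)) := by rw [hfu]
        _ ≤ c * (c * dist (f b) b * c ^ n) := by gcongr
        _ = c * dist (f b) b * c ^ (n + 1) := by ring
  obtain ⟨z, hz⟩ := cauchySeq_tendsto_of_complete (cauchySeq_of_le_geometric c _ hc₁ hgeom)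
  have hfz : Tendsto (fun n => f (u (n + 1))) atTop (𝓝 (f z)) :=
    (hf.tendsto z).comp (hz.comp (tendsto_add_atTop_nat 1))
  simp only [hfu] at hfz
  exact ⟨z, tendsto_nhds_unique hfz hz⟩

theorem exists_isPeriodicPt_of_dist_iterate_lt {X : Type*} [MetricSpace X] [CompleteSpace X]
    {S : X → X} (hS : Continuous S) {l η ξ : ℝ} (hl : 1 < l)
    (hexp : ∀ x y, dist x y ≤ η → l * dist x y ≤ dist (S x) (S y))
    (hball : ∀ x, ball (S x) ξ ⊆ S '' ball x η) {m : ℕ} (hm : 0 < m) {b : X}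
    (hb : dist (S^[m] b) b < ξ) : ∃ z, IsPeriodicPt S m z := by
  have hlm : 1 < l ^ m := one_lt_pow₀ hl hm.ne'
  refine exists_isFixedPt_of_forall_exists_preimage (hS.iterate m) (by positivity)
    (inv_lt_one_of_one_lt₀ hlm) (A := {x | dist (S^[m] x) x < ξ}) ⟨b, hb⟩ fun x hx => ?_
  obtain ⟨y, hy, hxy⟩ := exists_iterate_eq_and_pow_mul_dist_le hl.le hexp hball m hx
  have hxy' : dist x y ≤ (l ^ m)⁻¹ * dist (S^[m] x) x := by
    rwa [le_inv_mul_iff₀ (by positivity)]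
  refine ⟨y, ?_, hy, hxy'⟩
  calc dist (S^[m] y) y = dist x y := by rw [hy]
    _ ≤ dist (S^[m] x) x :=
      hxy'.trans (mul_le_of_le_one_left dist_nonneg (inv_le_one_of_one_le₀ hlm.le))
    _ < ξ := hx

/-- A zero exponent forces points within `η` of each other to coincide, so any exponent works. -/
theorem DistanceExpanding.exists_pos_iterate {X : Type*} [MetricSpace X] {T : X → X}
    (hT : DistanceExpanding T) : ∃ (l η : ℝ) (N : ℕ), 1 < l ∧ 0 < η ∧ 0 < N ∧
      ∀ x y, dist x y ≤ η → l * dist x y ≤ dist (T^[N] x) (T^[N] y) := by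
  obtain ⟨l, η, N, hl, hη, hexp⟩ := hT
  rcases N.eq_zero_or_pos with rfl | hN
  · refine ⟨l, η, 1, hl, hη, one_pos, fun x y hxy => ?_⟩
    have hxy₀ := hexp x y hxy
    rw [iterate_zero_apply, iterate_zero_apply] at hxy₀
    obtain rfl : x = y := dist_le_zero.1 (by nlinarith [dist_nonneg (x := x) (y := y)])
    simp
  · exact ⟨l, η, N, hl, hη, hN, hexp⟩

theorem stmt1 {X : Type*} [MetricSpace X] [CompactSpace X] [Nonempty X] (T : X → X)
    (hcont : Continuous T) (hopen : IsOpenMap T) (hexp : DistanceExpanding T) :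
    ∃ (z : X) (n : ℕ), 1 ≤ n ∧ T^[n] z = z := by
  obtain ⟨l, η, N, hl, hη, hN, hexpN⟩ := hexp.exists_pos_iterate
  obtain ⟨ξ, hξ, hball⟩ :=
    (hopen.iterate N).exists_pos_forall_ball_subset_image_ball (hcont.iterate N) hη
  obtain ⟨b, m, hm, hb⟩ := exists_pos_dist_iterate_lt T^[N] hξ
  obtain ⟨z, hz⟩ := exists_isPeriodicPt_of_dist_iterate_lt (hcont.iterate N) hl hexpN hball hm hb
  refine ⟨z, N * m, Nat.mul_pos hN hm, ?_⟩
  rw [iterate_mul]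
  exact hz
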